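/- Let H be a Hopf algebra, A a left H-module equipped with an H-equivariant family of bilinear multiplications a ∗_λ b parameterized by λ ∈ H* (i.e. an H-equivariant map Λ : H* ⊗ A ⊗ A → A) satisfying the shifted associativity (a ∗_{λ⁽²⁾} b) ∗_{λ⁽¹⁾} c = a⁽⁰⁾ ∗_{λ⁽¹⁾} (b ∗_{λ⁽²⁾ a⁽¹⁾} c), where A is a right H*-comodule with coaction a ↦ a⁽⁰⁾ ⊗ a⁽¹⁾. If λ ∈ H* is a group-like element (Δ(λ) = λ ⊗ λ, ε(λ) = 1), then ∗_λ restricted to the subspace A^H of H-invariant elements of A is an associative multiplication. -/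
import Mathlib


/-!
STATEMENT 10: Let `H` be a Hopf algebra and `A` a right `H*`-comodule (hence a left
`H`-module) with an `H`-equivariant family of multiplications `a ∗_λ b`, `λ ∈ H*`,
given by a map `Λ : H* ⊗ A ⊗ A → A` satisfying the shifted associativity
`(a ∗_{λ⁽²⁾} b) ∗_{λ⁽¹⁾} c = a⁽⁰⁾ ∗_{λ⁽¹⁾} (b ∗_{λ⁽²⁾ a⁽¹⁾} c)`.
If `λ ∈ H*` is group-like then `∗_λ`, restricted to the subspace of `H`-invariant
elements of `A` (the `H*`-coinvariants), is an associative multiplication.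
We work with the restricted dual abstractly: `K` is a Hopf algebra playing the role
of `H*`, and `H`-invariance of `a ∈ A` is coinvariance `δ(a) = a ⊗ 1`.
-/

open TensorProduct LinearMap

noncomputable section

variable (k : Type*) [Field k]
variable (K : Type*) [Ring K] [HopfAlgebra k K]
variable (A : Type*) [AddCommGroup A] [Module k A]

/-- The coadjoint coaction `λ ↦ λ⁽²⁾ ⊗ γ(λ⁽¹⁾)λ⁽³⁾` of `K = H*` on itself (the coaction
corresponding to the `H`-action `x ▷ λ = x⁽²⁾ ⇀ λ ↼ γ(x⁽¹⁾)`). -/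
def coadK : K →ₗ[k] K ⊗[k] K :=
  (LinearMap.lTensor K ((LinearMap.mul' k K) ∘ₗ
      (LinearMap.rTensor K (HopfAlgebra.antipode (R := k))))) ∘ₗ
    (TensorProduct.assoc k K K K).toLinearMap ∘ₗ
    (LinearMap.rTensor K (TensorProduct.comm k K K).toLinearMap) ∘ₗ
    (LinearMap.rTensor K (Coalgebra.comul (R := k))) ∘ₗ
    (Coalgebra.comul (R := k))

variable {K A}

/-- The tensor-product coaction on `A ⊗ A` of a right `K`-comodule `A`. -/
def coactAA (δA : A →ₗ[k] A ⊗[k] K) : (A ⊗[k] A) →ₗ[k] (A ⊗[k] A) ⊗[k] K :=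
  (LinearMap.lTensor (A ⊗[k] A) (LinearMap.mul' k K)) ∘ₗ
    (TensorProduct.tensorTensorTensorComm k A K A K).toLinearMap ∘ₗ
    (TensorProduct.map δA δA)

/-- The coaction on `K ⊗ (A ⊗ A)` (coadjoint on `K`, tensor coaction on `A ⊗ A`). -/
def coactKAA (δA : A →ₗ[k] A ⊗[k] K) :
    K ⊗[k] (A ⊗[k] A) →ₗ[k] (K ⊗[k] (A ⊗[k] A)) ⊗[k] K :=
  (LinearMap.lTensor (K ⊗[k] (A ⊗[k] A)) (LinearMap.mul' k K)) ∘ₗ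
    (TensorProduct.tensorTensorTensorComm k K K (A ⊗[k] A) K).toLinearMap ∘ₗ
    (TensorProduct.map (coadK k K) (coactAA k δA))

/-- The left-hand side `(a ∗_{λ⁽²⁾} b) ∗_{λ⁽¹⁾} c` of shifted associativity. -/
def shAssocL (Λ : K ⊗[k] (A ⊗[k] A) →ₗ[k] A) :
    K ⊗[k] ((A ⊗[k] A) ⊗[k] A) →ₗ[k] A :=
  Λ ∘ₗ
    (LinearMap.lTensor K ((TensorProduct.map Λ (LinearMap.id : A →ₗ[k] A)) ∘ₗ
      (TensorProduct.assoc k K (A ⊗[k] A) A).symm.toLinearMap)) ∘ₗ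
    (TensorProduct.assoc k K K ((A ⊗[k] A) ⊗[k] A)).toLinearMap ∘ₗ
    (LinearMap.rTensor ((A ⊗[k] A) ⊗[k] A) (Coalgebra.comul (R := k)))

/-- The right-hand side `a⁽⁰⁾ ∗_{λ⁽¹⁾} (b ∗_{λ⁽²⁾ a⁽¹⁾} c)` of shifted associativity. -/
def shAssocR (δA : A →ₗ[k] A ⊗[k] K) (Λ : K ⊗[k] (A ⊗[k] A) →ₗ[k] A) :
    K ⊗[k] ((A ⊗[k] A) ⊗[k] A) →ₗ[k] A :=
  Λ ∘ₗ (TensorProduct.assoc k K A A).toLinearMap ∘ₗ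
    (LinearMap.lTensor (K ⊗[k] A) Λ) ∘ₗ
    (TensorProduct.assoc k (K ⊗[k] A) K (A ⊗[k] A)).toLinearMap ∘ₗ
    (LinearMap.rTensor (A ⊗[k] A) (LinearMap.lTensor (K ⊗[k] A) (LinearMap.mul' k K))) ∘ₗ
    (LinearMap.rTensor (A ⊗[k] A) (TensorProduct.tensorTensorTensorComm k K K A K).toLinearMap) ∘ₗ
    (TensorProduct.assoc k (K ⊗[k] K) (A ⊗[k] K) (A ⊗[k] A)).symm.toLinearMap ∘ₗ
    (TensorProduct.map (Coalgebra.comul (R := k))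
      (TensorProduct.map δA (LinearMap.id : A ⊗[k] A →ₗ[k] A ⊗[k] A))) ∘ₗ
    (LinearMap.lTensor K (TensorProduct.assoc k A A A).toLinearMap)

theorem statement10
    (δA : A →ₗ[k] A ⊗[k] K)
    -- `A` is a right `K`-comodule:
    (coassoc : (LinearMap.lTensor A (Coalgebra.comul (R := k))) ∘ₗ δA
      = (TensorProduct.assoc k A K K).toLinearMap ∘ₗ (LinearMap.rTensor K δA) ∘ₗ δA)
    (counital : (TensorProduct.rid k A).toLinearMap ∘ₗ
      (LinearMap.lTensor A (Coalgebra.counit (R := k))) ∘ₗ δA = LinearMap.id)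
    -- the family of multiplications, `H`-equivariant (i.e. `K`-colinear):
    (Λ : K ⊗[k] (A ⊗[k] A) →ₗ[k] A)
    (Λ_equiv : δA ∘ₗ Λ = (LinearMap.rTensor K Λ) ∘ₗ (coactKAA k δA))
    -- shifted associativity:
    (hshift : shAssocL k Λ = shAssocR k δA Λ) :
    ∀ lam : K, Coalgebra.comul (R := k) lam = lam ⊗ₜ[k] lam →
      Coalgebra.counit (R := k) lam = 1 →
      -- `∗_lam` preserves the space of invariants, and is associative on it:
      (∀ a b : A, δA a = a ⊗ₜ[k] 1 → δA b = b ⊗ₜ[k] 1 →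
        δA (Λ (lam ⊗ₜ[k] (a ⊗ₜ[k] b))) = (Λ (lam ⊗ₜ[k] (a ⊗ₜ[k] b))) ⊗ₜ[k] 1) ∧
      (∀ a b c : A, δA a = a ⊗ₜ[k] 1 → δA b = b ⊗ₜ[k] 1 → δA c = c ⊗ₜ[k] 1 →
        Λ (lam ⊗ₜ[k] ((Λ (lam ⊗ₜ[k] (a ⊗ₜ[k] b))) ⊗ₜ[k] c))
          = Λ (lam ⊗ₜ[k] (a ⊗ₜ[k] (Λ (lam ⊗ₜ[k] (b ⊗ₜ[k] c)))))) := by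
  intro lam hΔ hε
  have hanti : HopfAlgebra.antipode (R := k) lam * lam = 1 := by
    have h := HopfAlgebra.mul_antipode_rTensor_comul_apply (R := k) (A := K) lam
    rw [hΔ] at h
    simpa [hε] using h
  constructor
  · intro a b ha hb
    have h := LinearMap.congr_fun Λ_equiv (lam ⊗ₜ[k] (a ⊗ₜ[k] b))
    simpa [coactKAA, coadK, coactAA, hΔ, ha, hb, hanti] using h
  · intro a b c ha hb hc
    have h := LinearMap.congr_fun hshift (lam ⊗ₜ[k] ((a ⊗ₜ[k] b) ⊗ₜ[k] c))
    simpa [shAssocL, shAssocR, hΔ, ha] using h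

end
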